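/- Let γ ∈ SGl(V) be a semilinear automorphism whose associated automorphism g = π(γ) maps the subring ℂ[[z]] ⊆ K onto itself. If W ⊆ V is a ℂ-subspace such that W ∩ V₊ is finite-dimensional over ℂ and V/(W + V₊) is finite-dimensional over ℂ, then γ(W) ∩ V₊ is finite-dimensional over ℂ and V/(γ(W) + V₊) is finite-dimensional over ℂ; that is, γ maps points of the Sato Grassmannian of (V, V₊) to points of the Sato Grassmannian. -/

import Mathlib

/-!
Semilinearity gives `γ v = ∑ⱼ g (vⱼ) • γ eⱼ`, and `g` preserves `ℂ[[z]]`, so `γ V₊` lies in a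
lattice `zᵐ V₊`, which exceeds `V₊` by a finite-dimensional space. Applied to `γ` and `γ⁻¹`, this
makes `γ V₊` and `V₊` commensurable. Being a point of the Sato Grassmannian only depends on the
commensurability class of `V₊`, and `γ` carries the point `W` of `(V, V₊)` to the point `γ W`
of `(V, γ V₊)`.
-/

noncomputable section

/-- `K = ℂ((z))`, the field of formal Laurent series over `ℂ`. -/
abbrev K : Type := LaurentSeries ℂ

/-- `V = Kⁿ`. -/
abbrev V (n : ℕ) : Type := Fin n → K

/-- `γ` is semilinear with associated `ℂ`-algebra automorphism `g`. -/
def IsSemilinearWith {n : ℕ} (γ : V n ≃ₗ[ℂ] V n) (g : K ≃ₐ[ℂ] K) : Prop :=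
  ∀ (f : K) (v : V n), γ (f • v) = g f • γ v

/-- `V₊ = ℂ[[z]]ⁿ ⊆ V`, the `ℂ`-subspace of vectors all of whose components have
vanishing Laurent coefficients in negative degrees. -/
def Vplus (n : ℕ) : Submodule ℂ (V n) where
  carrier := {v | ∀ i : Fin n, ∀ k : ℤ, k < 0 → (v i).coeff k = 0}
  add_mem' := by
    intro u v hu hv i k hk
    show (u i + v i).coeff k = 0
    rw [HahnSeries.coeff_add, hu i k hk, hv i k hk, add_zero]
  zero_mem' := by intro i k hk; simp
  smul_mem' := by
    intro c v hv i k hk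
    show (c • v i).coeff k = 0
    rw [HahnSeries.coeff_smul, hv i k hk, smul_zero]

/-- The subring `ℂ[[z]] ⊆ K` of formal power series. -/
def PowerSeriesSet : Set K := {f | ∀ k : ℤ, k < 0 → f.coeff k = 0}

namespace Submodule

variable {R M : Type*} [Ring R] [AddCommGroup M] [Module R M]

theorem CoFG.of_sup_fg {S T : Submodule R M} (h : (S ⊔ T).CoFG) (hT : T.FG) : S.CoFG := by
  have : Module.Finite R (T.map S.mkQ) := Module.Finite.iff_fg.mpr (hT.map _)
  have : Module.Finite R ((M ⧸ S) ⧸ T.map S.mkQ) :=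
    Module.Finite.equiv (quotientQuotientEquivQuotientSup S T).symm
  exact Module.Finite.of_submodule_quotient (T.map S.mkQ)

theorem CoFG.sup_of_le_sup {W A B F : Submodule R M} (hWA : (W ⊔ A).CoFG) (hAB : A ≤ B ⊔ F)
    (hF : F.FG) : (W ⊔ B).CoFG := by
  refine CoFG.of_sup_fg (hWA.of_le ?_) hF
  rw [sup_assoc]
  exact sup_le_sup_left hAB W

variable [IsNoetherianRing R]

theorem FG.inf_of_le_sup {W A B F : Submodule R M} (hWA : (W ⊓ A).FG) (hBA : B ≤ A ⊔ F)
    (hF : F.FG) : (W ⊓ B).FG := by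
  refine fg_of_fg_map_of_fg_inf_ker A.mkQ ((hF.map A.mkQ).of_le ?_) (hWA.of_le ?_)
  · calc (W ⊓ B).map A.mkQ ≤ (A ⊔ F).map A.mkQ := map_mono (inf_le_right.trans hBA)
      _ = F.map A.mkQ := by rw [map_sup, mkQ_map_self, bot_sup_eq]
  · rw [ker_mkQ]
    exact inf_le_inf_right A inf_le_left

theorem exists_fg_le_sup_of_inf_ker_le {N : Type*} [AddCommGroup N] [Module R N]
    [Module.Finite R N] (φ : M →ₗ[R] N) {A B : Submodule R M} (h : B ⊓ LinearMap.ker φ ≤ A) :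
    ∃ F : Submodule R M, F.FG ∧ B ≤ A ⊔ F := by
  have hfg : (span R (φ '' B)).FG := by
    rw [← map_span, span_eq]
    exact IsNoetherian.noetherian _
  obtain ⟨s, hsB, hspan⟩ := (fg_span_iff_fg_span_finset_subset _).mp hfg
  obtain ⟨t, htB, ht, hts⟩ := s.finite_toSet.exists_subset_finite_image_eq hsB
  refine ⟨span R t, fg_span ht, fun b hb => ?_⟩
  have : φ b ∈ (span R t).map φ := by
    rw [map_span, hts, ← hspan]
    exact subset_span ⟨b, hb, rfl⟩
  obtain ⟨f, hf, hfb⟩ := this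
  have hbf : b - f ∈ A :=
    h ⟨sub_mem hb (span_le.mpr htB hf), by simp [hfb]⟩
  simpa using add_mem_sup hbf hf

end Submodule

section SatoGrassmannian

variable {R M : Type*} [Ring R] [AddCommGroup M] [Module R M]

def IsSatoGrassmannianPoint (A W : Submodule R M) : Prop :=
  (W ⊓ A).FG ∧ (W ⊔ A).CoFG

variable {A W : Submodule R M}

theorem IsSatoGrassmannianPoint.map {M₂ : Type*} [AddCommGroup M₂] [Module R M₂]
    (e : M ≃ₗ[R] M₂) (hW : IsSatoGrassmannianPoint A W) :
    IsSatoGrassmannianPoint (A.map (e : M →ₗ[R] M₂)) (W.map (e : M →ₗ[R] M₂)) := by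
  obtain ⟨hfg, hcofg⟩ := hW
  refine ⟨?_, ?_⟩
  · rw [← Submodule.map_inf _ e.injective]
    exact hfg.map _
  · rw [← Submodule.map_sup]
    exact Module.Finite.equiv (Submodule.Quotient.equiv _ _ e rfl)

theorem IsSatoGrassmannianPoint.of_le_sup [IsNoetherianRing R] {B F F' : Submodule R M}
    (hW : IsSatoGrassmannianPoint A W) (hBA : B ≤ A ⊔ F) (hF : F.FG) (hAB : A ≤ B ⊔ F')
    (hF' : F'.FG) : IsSatoGrassmannianPoint B W :=
  ⟨hW.1.inf_of_le_sup hBA hF, hW.2.sup_of_le_sup hAB hF'⟩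

end SatoGrassmannian

/-- `zᵐ ℂ[[z]]ⁿ ⊆ V`. -/
def lattice (n : ℕ) (m : ℤ) : Submodule ℂ (V n) where
  carrier := {v | ∀ i : Fin n, ∀ k : ℤ, k < m → (v i).coeff k = 0}
  add_mem' hu hv i k hk := by
    simp only [Pi.add_apply, HahnSeries.coeff_add, hu i k hk, hv i k hk, add_zero]
  zero_mem' _ _ _ := rfl
  smul_mem' c v hv i k hk := by
    simp only [Pi.smul_apply, HahnSeries.coeff_smul, hv i k hk, smul_zero]

theorem mem_lattice_iff_le_orderTop {n : ℕ} {m : ℤ} {v : V n} :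
    v ∈ lattice n m ↔ ∀ i, (m : WithTop ℤ) ≤ (v i).orderTop := by
  simp only [HahnSeries.le_orderTop_iff_forall, WithTop.coe_lt_coe]
  rfl

theorem smul_mem_lattice {n : ℕ} {m : ℤ} {f : K} (hf : f ∈ PowerSeriesSet) {v : V n}
    (hv : v ∈ lattice n m) : f • v ∈ lattice n m := by
  have hf0 : ((0 : ℤ) : WithTop ℤ) ≤ f.orderTop := HahnSeries.le_orderTop_iff_forall.mpr
    fun k hk => hf k (WithTop.coe_lt_coe.mp hk)
  rw [mem_lattice_iff_le_orderTop] at hv ⊢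
  intro i
  simpa using add_le_add hf0 (hv i)

theorem exists_forall_mem_lattice {n : ℕ} {ι : Type*} [Finite ι] (v : ι → V n) :
    ∃ m, ∀ j, v j ∈ lattice n m := by
  obtain ⟨m, hm⟩ := (Set.finite_range fun p : ι × Fin n => (v p.1 p.2).order).bddBelow
  exact ⟨m, fun j i k hk =>
    HahnSeries.coeff_eq_zero_of_lt_order (hk.trans_le (hm ⟨(j, i), rfl⟩))⟩

def principalCoeffs (n : ℕ) (m : ℤ) : V n →ₗ[ℂ] (Fin n → Finset.Ico m 0 → ℂ) where
  toFun v i k := (v i).coeff k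
  map_add' _ _ := rfl
  map_smul' _ _ := rfl

theorem lattice_inf_ker_principalCoeffs_le (n : ℕ) (m : ℤ) :
    lattice n m ⊓ LinearMap.ker (principalCoeffs n m) ≤ Vplus n := by
  rintro v ⟨hv, hker⟩ i k hk
  by_cases hmk : k < m
  · exact hv i k hmk
  · exact congr_fun (congr_fun hker i) ⟨k, Finset.mem_Ico.mpr ⟨not_lt.mp hmk, hk⟩⟩

theorem exists_fg_lattice_le_Vplus_sup (n : ℕ) (m : ℤ) :
    ∃ F : Submodule ℂ (V n), F.FG ∧ lattice n m ≤ Vplus n ⊔ F :=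
  Submodule.exists_fg_le_sup_of_inf_ker_le _ (lattice_inf_ker_principalCoeffs_le n m)

namespace IsSemilinearWith

variable {n : ℕ} {γ : V n ≃ₗ[ℂ] V n} {g : K ≃ₐ[ℂ] K}

theorem symm (h : IsSemilinearWith γ g) : IsSemilinearWith γ.symm g.symm := fun f v =>
  γ.injective <| by rw [γ.apply_symm_apply, h, AlgEquiv.apply_symm_apply, γ.apply_symm_apply]

theorem apply_eq_sum (h : IsSemilinearWith γ g) (v : V n) :
    γ v = ∑ j, g (v j) • γ (Pi.single j 1) := by
  conv_lhs => rw [← (Pi.basisFun K (Fin n)).sum_repr v]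
  simp only [Pi.basisFun_repr, Pi.basisFun_apply, map_sum]
  exact Fintype.sum_congr _ _ fun j => h _ _

theorem exists_map_Vplus_le_lattice (h : IsSemilinearWith γ g)
    (hg : ∀ f ∈ PowerSeriesSet, g f ∈ PowerSeriesSet) :
    ∃ m, (Vplus n).map (γ : V n →ₗ[ℂ] V n) ≤ lattice n m := by
  obtain ⟨m, hm⟩ := exists_forall_mem_lattice fun j : Fin n => γ (Pi.single j 1)
  refine ⟨m, ?_⟩
  rintro _ ⟨v, hv, rfl⟩
  rw [LinearEquiv.coe_coe, h.apply_eq_sum]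
  exact Submodule.sum_mem _ fun j _ => smul_mem_lattice (hg _ (hv j)) (hm j)

theorem exists_fg_map_Vplus_le_sup (h : IsSemilinearWith γ g)
    (hg : ∀ f ∈ PowerSeriesSet, g f ∈ PowerSeriesSet) :
    ∃ F : Submodule ℂ (V n), F.FG ∧ (Vplus n).map (γ : V n →ₗ[ℂ] V n) ≤ Vplus n ⊔ F := by
  obtain ⟨m, hm⟩ := h.exists_map_Vplus_le_lattice hg
  obtain ⟨F, hF, hle⟩ := exists_fg_lattice_le_Vplus_sup n m
  exact ⟨F, hF, hm.trans hle⟩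

theorem exists_fg_Vplus_le_map_sup (h : IsSemilinearWith γ g)
    (hg : ∀ f ∈ PowerSeriesSet, g.symm f ∈ PowerSeriesSet) :
    ∃ F : Submodule ℂ (V n), F.FG ∧ Vplus n ≤ (Vplus n).map (γ : V n →ₗ[ℂ] V n) ⊔ F := by
  obtain ⟨F, hF, hle⟩ := h.symm.exists_fg_map_Vplus_le_sup hg
  refine ⟨F.map (γ : V n →ₗ[ℂ] V n), hF.map _, ?_⟩
  rw [← Submodule.map_sup, Submodule.map_equiv_eq_comap_symm]
  exact Submodule.map_le_iff_le_comap.mp hle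

end IsSemilinearWith

theorem semilinear_preserves_grassmannian_general (n : ℕ)
    (γ : V n ≃ₗ[ℂ] V n) (g : K ≃ₐ[ℂ] K) (h : IsSemilinearWith γ g)
    (hg : g '' PowerSeriesSet = PowerSeriesSet) (W : Submodule ℂ (V n))
    (h1 : FiniteDimensional ℂ ↥(W ⊓ Vplus n))
    (h2 : FiniteDimensional ℂ (V n ⧸ (W ⊔ Vplus n))) :
    FiniteDimensional ℂ ↥(W.map (γ : V n →ₗ[ℂ] V n) ⊓ Vplus n) ∧
    FiniteDimensional ℂ (V n ⧸ (W.map (γ : V n →ₗ[ℂ] V n) ⊔ Vplus n)) := by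
  have hgP : ∀ f ∈ PowerSeriesSet, g f ∈ PowerSeriesSet := fun f hf =>
    hg ▸ Set.mem_image_of_mem g hf
  have hgP' : ∀ f ∈ PowerSeriesSet, g.symm f ∈ PowerSeriesSet := fun f hf => by
    rw [← hg] at hf
    obtain ⟨u, hu, rfl⟩ := hf
    rwa [AlgEquiv.symm_apply_apply]
  obtain ⟨F, hF, hγF⟩ := h.exists_fg_map_Vplus_le_sup hgP
  obtain ⟨F', hF', hγF'⟩ := h.exists_fg_Vplus_le_map_sup hgP'
  have hW : IsSatoGrassmannianPoint (Vplus n) W := ⟨Module.Finite.iff_fg.mp h1, h2⟩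
  obtain ⟨hfg, hcofg⟩ := (hW.map γ).of_le_sup hγF' hF' hγF hF
  exact ⟨Module.Finite.iff_fg.mpr hfg, hcofg⟩

/-- A `ℂ`-subspace `W ⊆ V` is a point of the Sato Grassmannian of `(V, V₊)` if both
`W ∩ V₊` and `V/(W + V₊)` are finite dimensional over `ℂ`. If `γ` is a semilinear
automorphism whose associated automorphism `g = π(γ)` maps `ℂ[[z]]` onto itself, then
`γ` maps points of the Sato Grassmannian to points of the Sato Grassmannian. -/
theorem semilinear_preserves_grassmannian (n : ℕ) (hn : 1 ≤ n)
    (γ : V n ≃ₗ[ℂ] V n) (g : K ≃ₐ[ℂ] K) (h : IsSemilinearWith γ g)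
    (hg : g '' PowerSeriesSet = PowerSeriesSet) (W : Submodule ℂ (V n))
    (h1 : FiniteDimensional ℂ ↥(W ⊓ Vplus n))
    (h2 : FiniteDimensional ℂ (V n ⧸ (W ⊔ Vplus n))) :
    FiniteDimensional ℂ ↥(W.map (γ : V n →ₗ[ℂ] V n) ⊓ Vplus n) ∧
    FiniteDimensional ℂ (V n ⧸ (W.map (γ : V n →ₗ[ℂ] V n) ⊔ Vplus n)) :=
  semilinear_preserves_grassmannian_general n γ g h hg W h1 h2

end
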